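/- The parallel composition of complementary outputs interleaves as an external choice: !Int.!Bool.1 + !Bool.!Int.1 ≃ !Int.1 | !Bool.1, where ≃ is the equivalence induced by strong subsession. -/
import Mathlib


/- Values and value types: values are integers or booleans, value types are sets of values. -/
abbrev Value := ℤ ⊕ Bool
abbrev VType := Set Value

def tInt : VType := Set.range Sum.inl
def tBool : VType := Set.range Sum.inr

/-- Session types: failure, success, value input/output, channel input/output (delegation),
external choice, internal choice, parallel composition. -/
inductive SessionType : Type
  | fail
  | succ
  | inV (t : VType) (η : SessionType)
  | outV (t : VType) (η : SessionType)
  | inS (ρ : SessionType) (η : SessionType)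
  | outS (ρ : SessionType) (η : SessionType)
  | choice (η θ : SessionType)
  | ichoice (η θ : SessionType)
  | par (η θ : SessionType)

open SessionType

/-- Labels of visible transitions. -/
inductive Label : Type
  | tick
  | inV (v : Value)
  | outV (v : Value)
  | inS (ρ : SessionType)
  | outS (ρ : SessionType)

/-- Visible (labeled) transitions of session types (rules r1,r3,r4,r5,r7,r9,r11,r12
and the symmetric variants). -/
inductive Vis : SessionType → Label → SessionType → Prop
  | r1 : Vis succ Label.tick succ
  | r3 (v : Value) (η : SessionType) : Vis (outV {v} η) (Label.outV v) η
  | r4 (ρ η : SessionType) : Vis (outS ρ η) (Label.outS ρ) η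
  | r5 (ρ η : SessionType) : Vis (inS ρ η) (Label.inS ρ) η
  | r7 {v : Value} {t : VType} (η : SessionType) : v ∈ t → Vis (inV t η) (Label.inV v) η
  | r9l {η μ η'} (θ : SessionType) : Vis η μ η' → Vis (choice η θ) μ η'
  | r9r {θ μ θ'} (η : SessionType) : Vis θ μ θ' → Vis (choice η θ) μ θ'
  | r11l {η μ η'} (θ : SessionType) : Vis η μ η' → μ ≠ Label.tick → Vis (par η θ) μ (par η' θ)
  | r11r {θ μ θ'} (η : SessionType) : Vis θ μ θ' → μ ≠ Label.tick → Vis (par η θ) μ (par η θ')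
  | r12 {η η' θ θ' : SessionType} : Vis η Label.tick η' → Vis θ Label.tick θ' →
      Vis (par η θ) Label.tick (par η' θ')

/-- Internal (unlabeled) transitions of session types (rules r2,r6,r8,r10,r13,r14,r15 and
symmetric variants), parameterized by the subtyping relation `sub` used in rules r14/r15. -/
inductive Red (sub : SessionType → SessionType → Prop) : SessionType → SessionType → Prop
  | r2l (η θ : SessionType) : Red sub (ichoice η θ) η
  | r2r (η θ : SessionType) : Red sub (ichoice η θ) θ
  | r6 {v : Value} {t : VType} (η : SessionType) : v ∈ t → Red sub (outV t η) (outV {v} η)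
  | r8l {η η'} (θ : SessionType) : Red sub η η' → Red sub (choice η θ) (choice η' θ)
  | r8r {θ θ'} (η : SessionType) : Red sub θ θ' → Red sub (choice η θ) (choice η θ')
  | r10l {η η'} (θ : SessionType) : Red sub η η' → Red sub (par η θ) (par η' θ)
  | r10r {θ θ'} (η : SessionType) : Red sub θ θ' → Red sub (par η θ) (par η θ')
  | r13l {η η' θ θ' : SessionType} {v : Value} : Vis η (Label.outV v) η' →
      Vis θ (Label.inV v) θ' → Red sub (par η θ) (par η' θ')
  | r13r {η η' θ θ' : SessionType} {v : Value} : Vis η (Label.inV v) η' →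
      Vis θ (Label.outV v) θ' → Red sub (par η θ) (par η' θ')
  | r14l {η η' θ θ' ρ ρ' : SessionType} : Vis η (Label.outS ρ) η' →
      Vis θ (Label.inS ρ') θ' → sub ρ ρ' → Red sub (par η θ) (par η' θ')
  | r14r {η η' θ θ' ρ ρ' : SessionType} : Vis η (Label.inS ρ') η' →
      Vis θ (Label.outS ρ) θ' → sub ρ ρ' → Red sub (par η θ) (par η' θ')
  | r15l {η η' θ θ' ρ ρ' : SessionType} : Vis η (Label.outS ρ) η' →
      Vis θ (Label.inS ρ') θ' → ¬ sub ρ ρ' → Red sub (par η θ) fail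
  | r15r {η η' θ θ' ρ ρ' : SessionType} : Vis η (Label.inS ρ') η' →
      Vis θ (Label.outS ρ) θ' → ¬ sub ρ ρ' → Red sub (par η θ) fail

/-- Weight of a session type: nesting depth of session types occurring in channel
input/output prefixes (used to break the circularity between transitions and subsession). -/
def weight : SessionType → ℕ
  | fail => 0
  | succ => 0
  | inV _ η => weight η
  | outV _ η => weight η
  | inS ρ η => max (weight ρ + 1) (weight η)
  | outS ρ η => max (weight ρ + 1) (weight η)
  | choice η θ => max (weight η) (weight θ)
  | ichoice η θ => max (weight η) (weight θ)
  | par η θ => max (weight η) (weight θ)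

/-- Reflexive-transitive closure of internal transitions. -/
def Reds (sub : SessionType → SessionType → Prop) : SessionType → SessionType → Prop :=
  Relation.ReflTransGen (Red sub)

/-- η can weakly perform the success action ✓. -/
def CanTick (sub : SessionType → SessionType → Prop) (η : SessionType) : Prop :=
  ∃ η' η'', Reds sub η η' ∧ Vis η' Label.tick η''

/-- Completeness: every internal reduct can weakly perform ✓. -/
def CompleteP (sub : SessionType → SessionType → Prop) (η : SessionType) : Prop :=
  ∀ η', Reds sub η η' → CanTick sub η'

/-- Subsession: preservation of completeness in all parallel contexts. -/
def PreceqP (sub : SessionType → SessionType → Prop) (η θ : SessionType) : Prop :=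
  ∀ ρ, CompleteP sub (par η ρ) → CompleteP sub (par θ ρ)

/-- Stratified approximations of the subsession relation. -/
def SubW : ℕ → SessionType → SessionType → Prop
  | 0 => fun _ _ => True
  | n + 1 => PreceqP (SubW n)

/-- The (stratified) subtyping relation used in the synchronization rules r14/r15:
at weight `n` it only depends on the strata below. -/
def SubRel (ρ ρ' : SessionType) : Prop := SubW (max (weight ρ) (weight ρ') + 1) ρ ρ'

/-- η is complete. -/
def SComplete (η : SessionType) : Prop := CompleteP SubRel η

/-- The subsession relation η ⪯ θ. -/
def Preceq (η θ : SessionType) : Prop := PreceqP SubRel η θ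

/-- The equivalence ≈ induced by ⪯. -/
def SEquiv (η θ : SessionType) : Prop := Preceq η θ ∧ Preceq θ η

/-- η is viable if some parallel context completes it. -/
def Viable (η : SessionType) : Prop := ∃ ρ, SComplete (par η ρ)

/-- Strong subsession η ⊑ θ : the closure of ⪯ under external-choice contexts. -/
def SSub (η θ : SessionType) : Prop := ∀ ρ, Preceq (choice η ρ) (choice θ ρ)

/-- The equivalence ≃ induced by ⊑. -/
def SSEquiv (η θ : SessionType) : Prop := SSub η θ ∧ SSub θ η

/-- Actions (prefixes) of session types. -/
inductive Act : Type
  | inV (t : VType)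
  | outV (t : VType)
  | inS (ρ : SessionType)
  | outS (ρ : SessionType)

/-- Prefixing a session type by an action. -/
def Act.pre : Act → SessionType → SessionType
  | .inV t, η => SessionType.inV t η
  | .outV t, η => SessionType.outV t η
  | .inS ρ, η => SessionType.inS ρ η
  | .outS ρ, η => SessionType.outS ρ η

namespace PCh

open SessionType

variable {sub : SessionType → SessionType → Prop}

/- ## Basic lemmas about Reds / CanTick / CompleteP -/

lemma reds_refl (a : SessionType) : Reds sub a a := Relation.ReflTransGen.refl

lemma reds_single {a b} (h : Red sub a b) : Reds sub a b := Relation.ReflTransGen.single h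

lemma reds_trans {a b c} (h1 : Reds sub a b) (h2 : Reds sub b c) : Reds sub a c :=
  Relation.ReflTransGen.trans h1 h2

lemma reds_par_l {a a'} (b : SessionType) (h : Reds sub a a') :
    Reds sub (par a b) (par a' b) := by
  induction h with
  | refl => exact .refl
  | tail _ h2 ih => exact ih.tail (Red.r10l b h2)

lemma reds_par_r {a a'} (b : SessionType) (h : Reds sub a a') :
    Reds sub (par b a) (par b a') := by
  induction h with
  | refl => exact .refl
  | tail _ h2 ih => exact ih.tail (Red.r10r b h2)

lemma reds_par {a a' b b'} (h1 : Reds sub a a') (h2 : Reds sub b b') :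
    Reds sub (par a b) (par a' b') :=
  reds_trans (reds_par_l b h1) (reds_par_r a' h2)

lemma reds_choice_l {a a'} (b : SessionType) (h : Reds sub a a') :
    Reds sub (choice a b) (choice a' b) := by
  induction h with
  | refl => exact .refl
  | tail _ h2 ih => exact ih.tail (Red.r8l b h2)

lemma reds_choice_r {a a'} (b : SessionType) (h : Reds sub a a') :
    Reds sub (choice b a) (choice b a') := by
  induction h with
  | refl => exact .refl
  | tail _ h2 ih => exact ih.tail (Red.r8r b h2)

lemma reds_choice {a a' b b'} (h1 : Reds sub a a') (h2 : Reds sub b b') :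
    Reds sub (choice a b) (choice a' b') :=
  reds_trans (reds_choice_l b h1) (reds_choice_r a' h2)

lemma canTick_pre {y y'} (h : Reds sub y y') (hct : CanTick sub y') : CanTick sub y := by
  obtain ⟨a, b, h1, h2⟩ := hct
  exact ⟨a, b, reds_trans h h1, h2⟩

lemma completeP_reds {x x'} (hc : CompleteP sub x) (h : Reds sub x x') : CompleteP sub x' :=
  fun z hz => hc z (reds_trans h hz)

/- ## Inversion lemmas -/

lemma tInt_not_singleton (v : Value) : tInt ≠ ({v} : Set Value) := by
  intro h
  have h0 : (Sum.inl 0 : Value) ∈ tInt := ⟨0, rfl⟩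
  have h1 : (Sum.inl 1 : Value) ∈ tInt := ⟨1, rfl⟩
  rw [h] at h0 h1
  rw [Set.mem_singleton_iff] at h0 h1
  rw [← h1] at h0
  simp at h0

lemma tBool_not_singleton (v : Value) : tBool ≠ ({v} : Set Value) := by
  intro h
  have h0 : (Sum.inr true : Value) ∈ tBool := ⟨true, rfl⟩
  have h1 : (Sum.inr false : Value) ∈ tBool := ⟨false, rfl⟩
  rw [h] at h0 h1
  rw [Set.mem_singleton_iff] at h0 h1
  rw [← h1] at h0
  simp at h0

lemma vis_outV_inv {t η μ η'} (h : Vis (outV t η) μ η') :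
    ∃ v, t = {v} ∧ μ = Label.outV v ∧ η' = η := by
  cases h
  exact ⟨_, rfl, rfl, rfl⟩

lemma vis_outV_tInt {η μ η'} (h : Vis (outV tInt η) μ η') : False := by
  obtain ⟨v, ht, -, -⟩ := vis_outV_inv h
  exact tInt_not_singleton v ht

lemma vis_outV_tBool {η μ η'} (h : Vis (outV tBool η) μ η') : False := by
  obtain ⟨v, ht, -, -⟩ := vis_outV_inv h
  exact tBool_not_singleton v ht

lemma vis_outV_singleton {v η μ η'} (h : Vis (outV ({v} : Set Value) η) μ η') :
    μ = Label.outV v ∧ η' = η := by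
  obtain ⟨w, ht, hμ, hη⟩ := vis_outV_inv h
  obtain rfl : v = w := by
    have := Set.singleton_eq_singleton_iff.mp ht.symm
    exact this.symm
  exact ⟨hμ, hη⟩

lemma vis_succ_inv {μ η'} (h : Vis succ μ η') : μ = Label.tick ∧ η' = succ := by
  cases h; exact ⟨rfl, rfl⟩

lemma vis_choice_inv {a b μ η'} (h : Vis (choice a b) μ η') :
    Vis a μ η' ∨ Vis b μ η' := by
  cases h with
  | r9l _ h => exact Or.inl h
  | r9r _ h => exact Or.inr h

lemma red_outV_inv {t η x'} (h : Red sub (outV t η) x') :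
    ∃ v, v ∈ t ∧ x' = outV {v} η := by
  cases h
  exact ⟨_, by assumption, rfl⟩

lemma red_succ_inv {x'} (h : Red sub succ x') : False := by cases h

lemma red_choice_inv {a b x'} (h : Red sub (choice a b) x') :
    (∃ a', Red sub a a' ∧ x' = choice a' b) ∨ (∃ b', Red sub b b' ∧ x' = choice a b') := by
  cases h with
  | r8l _ h => exact Or.inl ⟨_, h, rfl⟩
  | r8r _ h => exact Or.inr ⟨_, h, rfl⟩

lemma outV_ne_tick (v : Value) : Label.outV v ≠ Label.tick := fun h => nomatch h

end PCh
namespace PCh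

open SessionType

/- ## Named states -/

abbrev vA1 : SessionType := outV tBool succ
abbrev vB1 : SessionType := outV tInt succ
abbrev vEA : SessionType := outV tInt vA1
abbrev vEB : SessionType := outV tBool vB1
abbrev vL0 : SessionType := choice vEA vEB
abbrev vR0 : SessionType := par vB1 vA1
abbrev cV (v : Value) : SessionType := outV {v} succ
abbrev vLn (v : Value) : SessionType := choice (outV {v} vA1) vEB
abbrev vLb (w : Value) : SessionType := choice vEA (outV {w} vB1)
abbrev vLnb (v w : Value) : SessionType := choice (outV {v} vA1) (outV {w} vB1)
abbrev vRn (v : Value) : SessionType := par (cV v) vA1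
abbrev vRb (w : Value) : SessionType := par vB1 (cV w)
abbrev vRnb (v w : Value) : SessionType := par (cV v) (cV w)
abbrev vSn : SessionType := par succ vA1
abbrev vSnb (w : Value) : SessionType := par succ (cV w)
abbrev vTb : SessionType := par vB1 succ
abbrev vTnb (v : Value) : SessionType := par (cV v) succ
abbrev vUU : SessionType := par succ succ

/- ## The forward simulation relation -/

inductive S : SessionType → SessionType → Prop
  | srfl (a : SessionType) : S a a
  | spar {y x c d} : S y x → S c d → S (par y c) (par x d)
  | sch {y x c d} : S y x → S c d → S (choice y c) (choice x d)
  | s0 : S vR0 vL0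
  | sn {v} (hv : v ∈ tInt) : S (vRn v) vL0
  | sb {w} (hw : w ∈ tBool) : S (vRb w) vL0
  | snb {v w} (hv : v ∈ tInt) (hw : w ∈ tBool) : S (vRnb v w) vL0
  | sSn : S vSn vA1
  | sSnb {w} (hw : w ∈ tBool) : S (vSnb w) vA1
  | sTb : S vTb vB1
  | sTnb {v} (hv : v ∈ tInt) : S (vTnb v) vB1
  | sU : S vUU succ
  | t0 : S vL0 vR0
  | tLn {v} (hv : v ∈ tInt) : S (vLn v) vR0
  | tLb {w} (hw : w ∈ tBool) : S (vLb w) vR0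
  | tLnb {v w} (hv : v ∈ tInt) (hw : w ∈ tBool) : S (vLnb v w) vR0
  | tA1 : S vA1 vSn
  | tA1b {w} (hw : w ∈ tBool) : S (cV w) (vSnb w)
  | tB1 : S vB1 vTb
  | tB1n {v} (hv : v ∈ tInt) : S (cV v) (vTnb v)
  | tsucc : S succ vUU

/- ## The graded reverse simulation relation -/

inductive G : ℕ → SessionType → SessionType → Prop
  | grfl (a : SessionType) : G 0 a a
  | gpar {j k y x c d} : G j y x → G k c d → G (j + k) (par y c) (par x d)
  | gch {j k y x c d} : G j y x → G k c d → G (j + k) (choice y c) (choice x d)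
  | g0 : G 0 vR0 vL0
  | gLn {v} (hv : v ∈ tInt) : G 0 vR0 (vLn v)
  | gLb {w} (hw : w ∈ tBool) : G 0 vR0 (vLb w)
  | gLnb {v w} (hv : v ∈ tInt) (hw : w ∈ tBool) : G 0 vR0 (vLnb v w)
  | gSn : G 0 vSn vA1
  | gSnb {w} (hw : w ∈ tBool) : G 0 (vSnb w) (cV w)
  | gTb : G 0 vTb vB1
  | gTnb {v} (hv : v ∈ tInt) : G 0 (vTnb v) (cV v)
  | gU : G 0 vUU succ
  | gRnLn {v} (hv : v ∈ tInt) : G 1 (vRn v) (vLn v)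
  | gRbLb {w} (hw : w ∈ tBool) : G 1 (vRb w) (vLb w)
  | gRnbLnb {v w} (hv : v ∈ tInt) (hw : w ∈ tBool) : G 1 (vRnb v w) (vLnb v w)
  | h0 : G 0 vL0 vR0
  | hRn {v} (hv : v ∈ tInt) : G 0 (vLn v) (vRn v)
  | hRb {w} (hw : w ∈ tBool) : G 0 (vLb w) (vRb w)
  | hRnb {v w} (hv : v ∈ tInt) (hw : w ∈ tBool) : G 0 (vLnb v w) (vRnb v w)
  | hSn : G 0 vA1 vSn
  | hSnb {w} (hw : w ∈ tBool) : G 0 (cV w) (vSnb w)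
  | hTb : G 0 vB1 vTb
  | hTnb {v} (hv : v ∈ tInt) : G 0 (cV v) (vTnb v)
  | hU : G 0 succ vUU

variable (sub : SessionType → SessionType → Prop)

/-- Forward simulation clauses. -/
def FwdSim : Prop :=
  ∀ y x, S y x →
    (∀ y', Red sub y y' → ∃ x', Reds sub x x' ∧ S y' x') ∧
    (∀ μ y', Vis y μ y' → ∃ x₁ x₂, Reds sub x x₁ ∧ Vis x₁ μ x₂ ∧ S y' x₂)

/-- Graded reverse simulation clauses. -/
def RevSim : Prop :=
  ∀ k y x, G k y x →
    (∀ x', Red sub x x' → ∃ j y' x'', Reds sub y y' ∧ Reds sub x' x'' ∧ G j y' x'' ∧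
      (j < k ∨ (j = k ∧ x'' = x'))) ∧
    (∀ μ x', Vis x μ x' → ∃ j y₁ y₂ y₃ x'', Reds sub y y₁ ∧ Vis y₁ μ y₂ ∧ Reds sub y₂ y₃ ∧
      Reds sub x' x'' ∧ G j y₃ x'' ∧ (j < k ∨ (j = k ∧ x'' = x')))

/-- Coupling of the forward simulation into the reverse simulation. -/
def Coupled : Prop :=
  ∀ y x, S y x → ∃ k y' x', Reds sub y y' ∧ Reds sub x x' ∧ G k y' x'

/- ## Abstract soundness -/

lemma fwd_reds (hS : FwdSim sub) {y x y'} (h : S y x) (hr : Reds sub y y') :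
    ∃ x', Reds sub x x' ∧ S y' x' := by
  induction hr with
  | refl => exact ⟨x, .refl, h⟩
  | tail _ h2 ih =>
    obtain ⟨x₁, hx₁, hS₁⟩ := ih
    obtain ⟨x₂, hx₂, hS₂⟩ := (hS _ _ hS₁).1 _ h2
    exact ⟨x₂, reds_trans hx₁ hx₂, hS₂⟩

lemma pull (hG : RevSim sub) :
    ∀ k y x, G k y x → CompleteP sub x → CanTick sub y := by
  intro k
  induction k using Nat.strong_induction_on with
  | _ k IH =>
    have main : ∀ x x₁, Reds sub x x₁ → ∀ x₂, Vis x₁ Label.tick x₂ →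
        ∀ y, G k y x → CompleteP sub x → CanTick sub y := by
      intro x x₁ hp
      induction hp using Relation.ReflTransGen.head_induction_on with
      | refl =>
        intro x₂ ht y hg _
        obtain ⟨j, y₁, y₂, y₃, x'', hy₁, hvt, -, -, -, -⟩ := (hG k y _ hg).2 _ _ ht
        exact ⟨y₁, y₂, hy₁, hvt⟩
      | head hxz hzx₁ ih =>
        intro x₂ ht y hg hc
        obtain ⟨j, y', x'', hyy, hxx, hg', hd⟩ := (hG k y _ hg).1 _ hxz
        rcases hd with hlt | ⟨rfl, rfl⟩
        · have hc'' : CompleteP sub x'' :=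
            completeP_reds hc (reds_trans (reds_single hxz) hxx)
          exact canTick_pre hyy (IH j hlt y' x'' hg' hc'')
        · have hc' : CompleteP sub _ := completeP_reds hc (reds_single hxz)
          exact canTick_pre hyy (ih x₂ ht y' hg' hc')
    intro y x hg hc
    obtain ⟨x₁, x₂, hp, ht⟩ := hc x .refl
    exact main x x₁ hp x₂ ht y hg hc

theorem sound (hS : FwdSim sub) (hC : Coupled sub) (hG : RevSim sub) :
    ∀ y x, S y x → CompleteP sub x → CompleteP sub y := by
  intro y x hS0 hc y' hr
  obtain ⟨x', hxx, hS'⟩ := fwd_reds sub hS hS0 hr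
  have hc' := completeP_reds hc hxx
  obtain ⟨k, y₂, x₂, hy, hx, hg⟩ := hC _ _ hS'
  exact canTick_pre hy (pull sub hG k y₂ x₂ hg (completeP_reds hc' hx))

end PCh
namespace PCh

open SessionType

variable {sub : SessionType → SessionType → Prop}

theorem coupled : Coupled sub := by
  intro y x h
  induction h with
  | srfl a => exact ⟨0, a, a, .refl, .refl, G.grfl a⟩
  | spar h1 h2 ih1 ih2 =>
    obtain ⟨k1, y1, x1, hy1, hx1, hg1⟩ := ih1
    obtain ⟨k2, y2, x2, hy2, hx2, hg2⟩ := ih2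
    exact ⟨k1 + k2, _, _, reds_par hy1 hy2, reds_par hx1 hx2, G.gpar hg1 hg2⟩
  | sch h1 h2 ih1 ih2 =>
    obtain ⟨k1, y1, x1, hy1, hx1, hg1⟩ := ih1
    obtain ⟨k2, y2, x2, hy2, hx2, hg2⟩ := ih2
    exact ⟨k1 + k2, _, _, reds_choice hy1 hy2, reds_choice hx1 hx2, G.gch hg1 hg2⟩
  | s0 => exact ⟨0, _, _, .refl, .refl, G.g0⟩
  | sn hv => exact ⟨1, _, _, .refl, reds_single (Red.r8l vEB (Red.r6 vA1 hv)), G.gRnLn hv⟩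
  | sb hw => exact ⟨1, _, _, .refl, reds_single (Red.r8r vEA (Red.r6 vB1 hw)), G.gRbLb hw⟩
  | @snb v w hv hw =>
    exact ⟨1, _, _, .refl,
      (reds_single (Red.r8l vEB (Red.r6 vA1 hv))).tail (Red.r8r _ (Red.r6 vB1 hw)),
      G.gRnbLnb hv hw⟩
  | sSn => exact ⟨0, _, _, .refl, .refl, G.gSn⟩
  | sSnb hw => exact ⟨0, _, _, .refl, reds_single (Red.r6 succ hw), G.gSnb hw⟩
  | sTb => exact ⟨0, _, _, .refl, .refl, G.gTb⟩
  | sTnb hv => exact ⟨0, _, _, .refl, reds_single (Red.r6 succ hv), G.gTnb hv⟩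
  | sU => exact ⟨0, _, _, .refl, .refl, G.gU⟩
  | t0 => exact ⟨0, _, _, .refl, .refl, G.h0⟩
  | tLn hv => exact ⟨0, _, _, .refl, reds_single (Red.r10l vA1 (Red.r6 succ hv)), G.hRn hv⟩
  | tLb hw => exact ⟨0, _, _, .refl, reds_single (Red.r10r vB1 (Red.r6 succ hw)), G.hRb hw⟩
  | @tLnb v w hv hw =>
    exact ⟨0, _, _, .refl,
      (reds_single (Red.r10l vA1 (Red.r6 succ hv))).tail (Red.r10r _ (Red.r6 succ hw)),
      G.hRnb hv hw⟩
  | tA1 => exact ⟨0, _, _, .refl, .refl, G.hSn⟩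
  | tA1b hw => exact ⟨0, _, _, .refl, .refl, G.hSnb hw⟩
  | tB1 => exact ⟨0, _, _, .refl, .refl, G.hTb⟩
  | tB1n hv => exact ⟨0, _, _, .refl, .refl, G.hTnb hv⟩
  | tsucc => exact ⟨0, _, _, .refl, .refl, G.hU⟩

end PCh
namespace PCh

open SessionType

variable {sub : SessionType → SessionType → Prop}

theorem fwdSim : FwdSim sub := by
  intro y x h
  induction h with
  | srfl a =>
    exact ⟨fun y' hr => ⟨y', reds_single hr, S.srfl y'⟩,
           fun μ y' hv => ⟨a, y', .refl, hv, S.srfl y'⟩⟩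
  | spar h1 h2 ih1 ih2 =>
    constructor
    · intro y' hr
      cases hr with
      | r10l _ h =>
        obtain ⟨x', hx, hs⟩ := ih1.1 _ h
        exact ⟨_, reds_par_l _ hx, S.spar hs h2⟩
      | r10r _ h =>
        obtain ⟨d', hd, hs⟩ := ih2.1 _ h
        exact ⟨_, reds_par_r _ hd, S.spar h1 hs⟩
      | r13l hva hvb =>
        obtain ⟨x₁, x₂, hx, hvx, hs⟩ := ih1.2 _ _ hva
        obtain ⟨d₁, d₂, hd, hvd, hs'⟩ := ih2.2 _ _ hvb
        exact ⟨_, (reds_par hx hd).tail (Red.r13l hvx hvd), S.spar hs hs'⟩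
      | r13r hva hvb =>
        obtain ⟨x₁, x₂, hx, hvx, hs⟩ := ih1.2 _ _ hva
        obtain ⟨d₁, d₂, hd, hvd, hs'⟩ := ih2.2 _ _ hvb
        exact ⟨_, (reds_par hx hd).tail (Red.r13r hvx hvd), S.spar hs hs'⟩
      | r14l hva hvb hsub =>
        obtain ⟨x₁, x₂, hx, hvx, hs⟩ := ih1.2 _ _ hva
        obtain ⟨d₁, d₂, hd, hvd, hs'⟩ := ih2.2 _ _ hvb
        exact ⟨_, (reds_par hx hd).tail (Red.r14l hvx hvd hsub), S.spar hs hs'⟩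
      | r14r hva hvb hsub =>
        obtain ⟨x₁, x₂, hx, hvx, hs⟩ := ih1.2 _ _ hva
        obtain ⟨d₁, d₂, hd, hvd, hs'⟩ := ih2.2 _ _ hvb
        exact ⟨_, (reds_par hx hd).tail (Red.r14r hvx hvd hsub), S.spar hs hs'⟩
      | r15l hva hvb hns =>
        obtain ⟨x₁, x₂, hx, hvx, hs⟩ := ih1.2 _ _ hva
        obtain ⟨d₁, d₂, hd, hvd, hs'⟩ := ih2.2 _ _ hvb
        exact ⟨_, (reds_par hx hd).tail (Red.r15l hvx hvd hns), S.srfl fail⟩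
      | r15r hva hvb hns =>
        obtain ⟨x₁, x₂, hx, hvx, hs⟩ := ih1.2 _ _ hva
        obtain ⟨d₁, d₂, hd, hvd, hs'⟩ := ih2.2 _ _ hvb
        exact ⟨_, (reds_par hx hd).tail (Red.r15r hvx hvd hns), S.srfl fail⟩
    · intro μ y' hv
      cases hv with
      | r11l _ h hne =>
        obtain ⟨x₁, x₂, hx, hvx, hs⟩ := ih1.2 _ _ h
        exact ⟨_, _, reds_par_l _ hx, Vis.r11l _ hvx hne, S.spar hs h2⟩
      | r11r _ h hne =>
        obtain ⟨d₁, d₂, hd, hvd, hs⟩ := ih2.2 _ _ h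
        exact ⟨_, _, reds_par_r _ hd, Vis.r11r _ hvd hne, S.spar h1 hs⟩
      | r12 ha hb =>
        obtain ⟨x₁, x₂, hx, hvx, hs⟩ := ih1.2 _ _ ha
        obtain ⟨d₁, d₂, hd, hvd, hs'⟩ := ih2.2 _ _ hb
        exact ⟨_, _, reds_par hx hd, Vis.r12 hvx hvd, S.spar hs hs'⟩
  | sch h1 h2 ih1 ih2 =>
    constructor
    · intro y' hr
      cases hr with
      | r8l _ h =>
        obtain ⟨x', hx, hs⟩ := ih1.1 _ h
        exact ⟨_, reds_choice_l _ hx, S.sch hs h2⟩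
      | r8r _ h =>
        obtain ⟨d', hd, hs⟩ := ih2.1 _ h
        exact ⟨_, reds_choice_r _ hd, S.sch h1 hs⟩
    · intro μ y' hv
      cases hv with
      | r9l _ h =>
        obtain ⟨x₁, x₂, hx, hvx, hs⟩ := ih1.2 _ _ h
        exact ⟨_, x₂, reds_choice_l _ hx, Vis.r9l _ hvx, hs⟩
      | r9r _ h =>
        obtain ⟨d₁, d₂, hd, hvd, hs⟩ := ih2.2 _ _ h
        exact ⟨_, d₂, reds_choice_r _ hd, Vis.r9r _ hvd, hs⟩
  | s0 =>
    constructor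
    · intro y' hr
      cases hr with
      | r10l _ h =>
        obtain ⟨v, hv, rfl⟩ := red_outV_inv h
        exact ⟨vL0, .refl, S.sn hv⟩
      | r10r _ h =>
        obtain ⟨w, hw, rfl⟩ := red_outV_inv h
        exact ⟨vL0, .refl, S.sb hw⟩
      | r13l h1 h2 => exact (vis_outV_tInt h1).elim
      | r13r h1 h2 => exact (vis_outV_tInt h1).elim
      | r14l h1 h2 h3 => exact (vis_outV_tInt h1).elim
      | r14r h1 h2 h3 => exact (vis_outV_tInt h1).elim
      | r15l h1 h2 h3 => exact (vis_outV_tInt h1).elim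
      | r15r h1 h2 h3 => exact (vis_outV_tInt h1).elim
    · intro μ y' hv
      cases hv with
      | r11l _ h _ => exact (vis_outV_tInt h).elim
      | r11r _ h _ => exact (vis_outV_tBool h).elim
      | r12 h _ => exact (vis_outV_tInt h).elim
  | @sn v hv =>
    constructor
    · intro y' hr
      cases hr with
      | r10l _ h =>
        obtain ⟨v', hv', rfl⟩ := red_outV_inv h
        rw [Set.mem_singleton_iff] at hv'
        subst hv'
        exact ⟨vL0, .refl, S.sn hv⟩
      | r10r _ h =>
        obtain ⟨w, hw, rfl⟩ := red_outV_inv h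
        exact ⟨vL0, .refl, S.snb hv hw⟩
      | r13l h1 h2 => exact (vis_outV_tBool h2).elim
      | r13r h1 h2 => exact Label.noConfusion (vis_outV_singleton h1).1
      | r14l h1 h2 h3 => exact Label.noConfusion (vis_outV_singleton h1).1
      | r14r h1 h2 h3 => exact Label.noConfusion (vis_outV_singleton h1).1
      | r15l h1 h2 h3 => exact Label.noConfusion (vis_outV_singleton h1).1
      | r15r h1 h2 h3 => exact Label.noConfusion (vis_outV_singleton h1).1
    · intro μ y' hv
      cases hv with
      | r11l _ h _ =>
        obtain ⟨rfl, rfl⟩ := vis_outV_singleton h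
        exact ⟨vLn v, vA1, reds_single (Red.r8l vEB (Red.r6 vA1 hv)),
          Vis.r9l vEB (Vis.r3 v vA1), S.sSn⟩
      | r11r _ h _ => exact (vis_outV_tBool h).elim
      | r12 h _ => exact Label.noConfusion (vis_outV_singleton h).1
  | @sb w hw =>
    constructor
    · intro y' hr
      cases hr with
      | r10l _ h =>
        obtain ⟨v, hv, rfl⟩ := red_outV_inv h
        exact ⟨vL0, .refl, S.snb hv hw⟩
      | r10r _ h =>
        obtain ⟨w', hw', rfl⟩ := red_outV_inv h
        rw [Set.mem_singleton_iff] at hw'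
        subst hw'
        exact ⟨vL0, .refl, S.sb hw⟩
      | r13l h1 h2 => exact (vis_outV_tInt h1).elim
      | r13r h1 h2 => exact (vis_outV_tInt h1).elim
      | r14l h1 h2 h3 => exact (vis_outV_tInt h1).elim
      | r14r h1 h2 h3 => exact (vis_outV_tInt h1).elim
      | r15l h1 h2 h3 => exact (vis_outV_tInt h1).elim
      | r15r h1 h2 h3 => exact (vis_outV_tInt h1).elim
    · intro μ y' hv
      cases hv with
      | r11l _ h _ => exact (vis_outV_tInt h).elim
      | r11r _ h _ =>
        obtain ⟨rfl, rfl⟩ := vis_outV_singleton h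
        exact ⟨vLb w, vB1, reds_single (Red.r8r vEA (Red.r6 vB1 hw)),
          Vis.r9r vEA (Vis.r3 w vB1), S.sTb⟩
      | r12 h _ => exact (vis_outV_tInt h).elim
  | @snb v w hv hw =>
    constructor
    · intro y' hr
      cases hr with
      | r10l _ h =>
        obtain ⟨v', hv', rfl⟩ := red_outV_inv h
        rw [Set.mem_singleton_iff] at hv'
        subst hv'
        exact ⟨vL0, .refl, S.snb hv hw⟩
      | r10r _ h =>
        obtain ⟨w', hw', rfl⟩ := red_outV_inv h
        rw [Set.mem_singleton_iff] at hw'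
        subst hw'
        exact ⟨vL0, .refl, S.snb hv hw⟩
      | r13l h1 h2 => exact Label.noConfusion (vis_outV_singleton h2).1
      | r13r h1 h2 => exact Label.noConfusion (vis_outV_singleton h1).1
      | r14l h1 h2 h3 => exact Label.noConfusion (vis_outV_singleton h1).1
      | r14r h1 h2 h3 => exact Label.noConfusion (vis_outV_singleton h1).1
      | r15l h1 h2 h3 => exact Label.noConfusion (vis_outV_singleton h1).1
      | r15r h1 h2 h3 => exact Label.noConfusion (vis_outV_singleton h1).1
    · intro μ y' hv
      cases hv with
      | r11l _ h _ =>
        obtain ⟨rfl, rfl⟩ := vis_outV_singleton h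
        exact ⟨vLn v, vA1, reds_single (Red.r8l vEB (Red.r6 vA1 hv)),
          Vis.r9l vEB (Vis.r3 v vA1), S.sSnb hw⟩
      | r11r _ h _ =>
        obtain ⟨rfl, rfl⟩ := vis_outV_singleton h
        exact ⟨vLb w, vB1, reds_single (Red.r8r vEA (Red.r6 vB1 hw)),
          Vis.r9r vEA (Vis.r3 w vB1), S.sTnb hv⟩
      | r12 h _ => exact Label.noConfusion (vis_outV_singleton h).1
  | sSn =>
    constructor
    · intro y' hr
      cases hr with
      | r10l _ h => exact (red_succ_inv h).elim
      | r10r _ h =>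
        obtain ⟨w, hw, rfl⟩ := red_outV_inv h
        exact ⟨vA1, .refl, S.sSnb hw⟩
      | r13l h1 h2 => exact Label.noConfusion (vis_succ_inv h1).1
      | r13r h1 h2 => exact Label.noConfusion (vis_succ_inv h1).1
      | r14l h1 h2 h3 => exact Label.noConfusion (vis_succ_inv h1).1
      | r14r h1 h2 h3 => exact Label.noConfusion (vis_succ_inv h1).1
      | r15l h1 h2 h3 => exact Label.noConfusion (vis_succ_inv h1).1
      | r15r h1 h2 h3 => exact Label.noConfusion (vis_succ_inv h1).1
    · intro μ y' hv
      cases hv with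
      | r11l _ h hne => exact (hne (vis_succ_inv h).1).elim
      | r11r _ h _ => exact (vis_outV_tBool h).elim
      | r12 h1 h2 => exact (vis_outV_tBool h2).elim
  | @sSnb w hw =>
    constructor
    · intro y' hr
      cases hr with
      | r10l _ h => exact (red_succ_inv h).elim
      | r10r _ h =>
        obtain ⟨w', hw', rfl⟩ := red_outV_inv h
        rw [Set.mem_singleton_iff] at hw'
        subst hw'
        exact ⟨vA1, .refl, S.sSnb hw⟩
      | r13l h1 h2 => exact Label.noConfusion (vis_succ_inv h1).1
      | r13r h1 h2 => exact Label.noConfusion (vis_succ_inv h1).1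
      | r14l h1 h2 h3 => exact Label.noConfusion (vis_succ_inv h1).1
      | r14r h1 h2 h3 => exact Label.noConfusion (vis_succ_inv h1).1
      | r15l h1 h2 h3 => exact Label.noConfusion (vis_succ_inv h1).1
      | r15r h1 h2 h3 => exact Label.noConfusion (vis_succ_inv h1).1
    · intro μ y' hv
      cases hv with
      | r11l _ h hne => exact (hne (vis_succ_inv h).1).elim
      | r11r _ h _ =>
        obtain ⟨rfl, rfl⟩ := vis_outV_singleton h
        exact ⟨cV w, succ, reds_single (Red.r6 succ hw), Vis.r3 w succ, S.sU⟩
      | r12 h1 h2 => exact Label.noConfusion (vis_outV_singleton h2).1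
  | sTb =>
    constructor
    · intro y' hr
      cases hr with
      | r10l _ h =>
        obtain ⟨v, hv, rfl⟩ := red_outV_inv h
        exact ⟨vB1, .refl, S.sTnb hv⟩
      | r10r _ h => exact (red_succ_inv h).elim
      | r13l h1 h2 => exact Label.noConfusion (vis_succ_inv h2).1
      | r13r h1 h2 => exact (vis_outV_tInt h1).elim
      | r14l h1 h2 h3 => exact (vis_outV_tInt h1).elim
      | r14r h1 h2 h3 => exact (vis_outV_tInt h1).elim
      | r15l h1 h2 h3 => exact (vis_outV_tInt h1).elim
      | r15r h1 h2 h3 => exact (vis_outV_tInt h1).elim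
    · intro μ y' hv
      cases hv with
      | r11l _ h _ => exact (vis_outV_tInt h).elim
      | r11r _ h hne => exact (hne (vis_succ_inv h).1).elim
      | r12 h1 h2 => exact (vis_outV_tInt h1).elim
  | @sTnb v hv =>
    constructor
    · intro y' hr
      cases hr with
      | r10l _ h =>
        obtain ⟨v', hv', rfl⟩ := red_outV_inv h
        rw [Set.mem_singleton_iff] at hv'
        subst hv'
        exact ⟨vB1, .refl, S.sTnb hv⟩
      | r10r _ h => exact (red_succ_inv h).elim
      | r13l h1 h2 => exact Label.noConfusion (vis_succ_inv h2).1
      | r13r h1 h2 => exact Label.noConfusion (vis_outV_singleton h1).1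
      | r14l h1 h2 h3 => exact Label.noConfusion (vis_outV_singleton h1).1
      | r14r h1 h2 h3 => exact Label.noConfusion (vis_outV_singleton h1).1
      | r15l h1 h2 h3 => exact Label.noConfusion (vis_outV_singleton h1).1
      | r15r h1 h2 h3 => exact Label.noConfusion (vis_outV_singleton h1).1
    · intro μ y' hv
      cases hv with
      | r11l _ h _ =>
        obtain ⟨rfl, rfl⟩ := vis_outV_singleton h
        exact ⟨cV v, succ, reds_single (Red.r6 succ hv), Vis.r3 v succ, S.sU⟩
      | r11r _ h hne => exact (hne (vis_succ_inv h).1).elim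
      | r12 h1 h2 => exact Label.noConfusion (vis_outV_singleton h1).1
  | sU =>
    constructor
    · intro y' hr
      cases hr with
      | r10l _ h => exact (red_succ_inv h).elim
      | r10r _ h => exact (red_succ_inv h).elim
      | r13l h1 h2 => exact Label.noConfusion (vis_succ_inv h1).1
      | r13r h1 h2 => exact Label.noConfusion (vis_succ_inv h1).1
      | r14l h1 h2 h3 => exact Label.noConfusion (vis_succ_inv h1).1
      | r14r h1 h2 h3 => exact Label.noConfusion (vis_succ_inv h1).1
      | r15l h1 h2 h3 => exact Label.noConfusion (vis_succ_inv h1).1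
      | r15r h1 h2 h3 => exact Label.noConfusion (vis_succ_inv h1).1
    · intro μ y' hv
      cases hv with
      | r11l _ h hne => exact (hne (vis_succ_inv h).1).elim
      | r11r _ h hne => exact (hne (vis_succ_inv h).1).elim
      | r12 h1 h2 =>
        obtain ⟨-, rfl⟩ := vis_succ_inv h1
        obtain ⟨-, rfl⟩ := vis_succ_inv h2
        exact ⟨succ, succ, .refl, Vis.r1, S.sU⟩
  | t0 =>
    constructor
    · intro y' hr
      cases hr with
      | r8l _ h =>
        obtain ⟨v, hv, rfl⟩ := red_outV_inv h
        exact ⟨vR0, .refl, S.tLn hv⟩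
      | r8r _ h =>
        obtain ⟨w, hw, rfl⟩ := red_outV_inv h
        exact ⟨vR0, .refl, S.tLb hw⟩
    · intro μ y' hv
      cases hv with
      | r9l _ h => exact (vis_outV_tInt h).elim
      | r9r _ h => exact (vis_outV_tBool h).elim
  | @tLn v hv =>
    constructor
    · intro y' hr
      cases hr with
      | r8l _ h =>
        obtain ⟨v', hv', rfl⟩ := red_outV_inv h
        rw [Set.mem_singleton_iff] at hv'
        subst hv'
        exact ⟨vR0, .refl, S.tLn hv⟩
      | r8r _ h =>
        obtain ⟨w, hw, rfl⟩ := red_outV_inv h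
        exact ⟨vR0, .refl, S.tLnb hv hw⟩
    · intro μ y' hv'
      cases hv' with
      | r9l _ h =>
        obtain ⟨rfl, rfl⟩ := vis_outV_singleton h
        exact ⟨vRn v, vSn, reds_single (Red.r10l vA1 (Red.r6 succ hv)),
          Vis.r11l vA1 (Vis.r3 v succ) (outV_ne_tick v), S.tA1⟩
      | r9r _ h => exact (vis_outV_tBool h).elim
  | @tLb w hw =>
    constructor
    · intro y' hr
      cases hr with
      | r8l _ h =>
        obtain ⟨v, hv, rfl⟩ := red_outV_inv h
        exact ⟨vR0, .refl, S.tLnb hv hw⟩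
      | r8r _ h =>
        obtain ⟨w', hw', rfl⟩ := red_outV_inv h
        rw [Set.mem_singleton_iff] at hw'
        subst hw'
        exact ⟨vR0, .refl, S.tLb hw⟩
    · intro μ y' hv'
      cases hv' with
      | r9l _ h => exact (vis_outV_tInt h).elim
      | r9r _ h =>
        obtain ⟨rfl, rfl⟩ := vis_outV_singleton h
        exact ⟨vRb w, vTb, reds_single (Red.r10r vB1 (Red.r6 succ hw)),
          Vis.r11r vB1 (Vis.r3 w succ) (outV_ne_tick w), S.tB1⟩
  | @tLnb v w hv hw =>
    constructor
    · intro y' hr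
      cases hr with
      | r8l _ h =>
        obtain ⟨v', hv', rfl⟩ := red_outV_inv h
        rw [Set.mem_singleton_iff] at hv'
        subst hv'
        exact ⟨vR0, .refl, S.tLnb hv hw⟩
      | r8r _ h =>
        obtain ⟨w', hw', rfl⟩ := red_outV_inv h
        rw [Set.mem_singleton_iff] at hw'
        subst hw'
        exact ⟨vR0, .refl, S.tLnb hv hw⟩
    · intro μ y' hv'
      cases hv' with
      | r9l _ h =>
        obtain ⟨rfl, rfl⟩ := vis_outV_singleton h
        exact ⟨vRn v, vSn, reds_single (Red.r10l vA1 (Red.r6 succ hv)),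
          Vis.r11l vA1 (Vis.r3 v succ) (outV_ne_tick v), S.tA1⟩
      | r9r _ h =>
        obtain ⟨rfl, rfl⟩ := vis_outV_singleton h
        exact ⟨vRb w, vTb, reds_single (Red.r10r vB1 (Red.r6 succ hw)),
          Vis.r11r vB1 (Vis.r3 w succ) (outV_ne_tick w), S.tB1⟩
  | tA1 =>
    constructor
    · intro y' hr
      obtain ⟨w, hw, rfl⟩ := red_outV_inv hr
      exact ⟨vSnb w, reds_single (Red.r10r succ (Red.r6 succ hw)), S.tA1b hw⟩
    · intro μ y' hv
      exact (vis_outV_tBool hv).elim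
  | @tA1b w hw =>
    constructor
    · intro y' hr
      obtain ⟨w', hw', rfl⟩ := red_outV_inv hr
      rw [Set.mem_singleton_iff] at hw'
      subst hw'
      exact ⟨_, .refl, S.tA1b hw⟩
    · intro μ y' hv
      obtain ⟨rfl, rfl⟩ := vis_outV_singleton hv
      exact ⟨vSnb w, vUU, .refl, Vis.r11r succ (Vis.r3 w succ) (outV_ne_tick w), S.tsucc⟩
  | tB1 =>
    constructor
    · intro y' hr
      obtain ⟨v, hv, rfl⟩ := red_outV_inv hr
      exact ⟨vTnb v, reds_single (Red.r10l succ (Red.r6 succ hv)), S.tB1n hv⟩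
    · intro μ y' hv
      exact (vis_outV_tInt hv).elim
  | @tB1n v hv =>
    constructor
    · intro y' hr
      obtain ⟨v', hv', rfl⟩ := red_outV_inv hr
      rw [Set.mem_singleton_iff] at hv'
      subst hv'
      exact ⟨_, .refl, S.tB1n hv⟩
    · intro μ y' hv'
      obtain ⟨rfl, rfl⟩ := vis_outV_singleton hv'
      exact ⟨vTnb v, vUU, .refl, Vis.r11l succ (Vis.r3 v succ) (outV_ne_tick v), S.tsucc⟩
  | tsucc =>
    constructor
    · intro y' hr
      exact (red_succ_inv hr).elim
    · intro μ y' hv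
      obtain ⟨rfl, rfl⟩ := vis_succ_inv hv
      exact ⟨vUU, vUU, .refl, Vis.r12 Vis.r1 Vis.r1, S.tsucc⟩

end PCh
namespace PCh

open SessionType

variable {sub : SessionType → SessionType → Prop}

lemma comb2 {j1 k1 j2 k2 : ℕ} {a b c d : SessionType} (f : SessionType → SessionType → SessionType)
    (h1 : j1 < k1 ∨ (j1 = k1 ∧ a = b)) (h2 : j2 < k2 ∨ (j2 = k2 ∧ c = d)) :
    j1 + j2 < k1 + k2 ∨ (j1 + j2 = k1 + k2 ∧ f a c = f b d) := by
  rcases h1 with h1 | ⟨rfl, rfl⟩ <;> rcases h2 with h2 | ⟨rfl, rfl⟩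
  · exact Or.inl (by omega)
  · exact Or.inl (by omega)
  · exact Or.inl (by omega)
  · exact Or.inr ⟨rfl, rfl⟩

lemma comb1l {j1 k1 : ℕ} (k2 : ℕ) {a b : SessionType}
    (h1 : j1 < k1 ∨ (j1 = k1 ∧ a = b)) :
    j1 < k1 + k2 ∨ (j1 = k1 + k2 ∧ a = b) := by
  rcases h1 with h1 | ⟨rfl, h⟩
  · exact Or.inl (by omega)
  · rcases Nat.eq_zero_or_pos k2 with rfl | hp
    · exact Or.inr ⟨rfl, h⟩
    · exact Or.inl (by omega)

lemma comb1r {j2 k2 : ℕ} (k1 : ℕ) {a b : SessionType}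
    (h2 : j2 < k2 ∨ (j2 = k2 ∧ a = b)) :
    j2 < k1 + k2 ∨ (j2 = k1 + k2 ∧ a = b) := by
  rcases h2 with h2 | ⟨rfl, h⟩
  · exact Or.inl (by omega)
  · rcases Nat.eq_zero_or_pos k1 with rfl | hp
    · exact Or.inr ⟨by omega, h⟩
    · exact Or.inl (by omega)

lemma zero_dis {a : SessionType} (k : ℕ) : 0 < k ∨ (0 = k ∧ a = a) := by
  rcases Nat.eq_zero_or_pos k with rfl | h
  · exact Or.inr ⟨rfl, rfl⟩
  · exact Or.inl h

theorem revSim : RevSim sub := by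
  intro k y x h
  induction h with
  | grfl a =>
    constructor
    · intro x' hr
      exact ⟨0, x', x', reds_single hr, .refl, G.grfl x', Or.inr ⟨rfl, rfl⟩⟩
    · intro μ x' hv
      exact ⟨0, a, x', x', x', .refl, hv, .refl, .refl, G.grfl x', Or.inr ⟨rfl, rfl⟩⟩
  | @gpar m n y0 x0 c d hm hn ihm ihn =>
    constructor
    · intro x' hr
      cases hr with
      | r10l _ h =>
        obtain ⟨j1, y1, x1, hy, hx, hg, hd⟩ := ihm.1 _ h
        exact ⟨j1 + n, par y1 c, par x1 d, reds_par_l _ hy, reds_par_l _ hx,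
          G.gpar hg hn, comb2 par hd (Or.inr ⟨rfl, rfl⟩)⟩
      | r10r _ h =>
        obtain ⟨j2, c1, d1, hc, hdx, hg, hd2⟩ := ihn.1 _ h
        exact ⟨m + j2, par y0 c1, par x0 d1, reds_par_r _ hc, reds_par_r _ hdx,
          G.gpar hm hg, comb2 par (Or.inr ⟨rfl, rfl⟩) hd2⟩
      | r13l h1 h2 =>
        obtain ⟨j1, y1, y2, y3, x1, hy1, hvy, hy3, hx1, hg1, hd1⟩ := ihm.2 _ _ h1
        obtain ⟨j2, c1, c2, c3, d1, hc1, hvc, hc3, hd1', hg2, hd2⟩ := ihn.2 _ _ h2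
        exact ⟨j1 + j2, par y3 c3, par x1 d1,
          (((reds_par hy1 hc1).tail (Red.r13l hvy hvc)).trans (reds_par hy3 hc3)),
          reds_par hx1 hd1', G.gpar hg1 hg2, comb2 par hd1 hd2⟩
      | r13r h1 h2 =>
        obtain ⟨j1, y1, y2, y3, x1, hy1, hvy, hy3, hx1, hg1, hd1⟩ := ihm.2 _ _ h1
        obtain ⟨j2, c1, c2, c3, d1, hc1, hvc, hc3, hd1', hg2, hd2⟩ := ihn.2 _ _ h2
        exact ⟨j1 + j2, par y3 c3, par x1 d1,
          (((reds_par hy1 hc1).tail (Red.r13r hvy hvc)).trans (reds_par hy3 hc3)),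
          reds_par hx1 hd1', G.gpar hg1 hg2, comb2 par hd1 hd2⟩
      | r14l h1 h2 hsub =>
        obtain ⟨j1, y1, y2, y3, x1, hy1, hvy, hy3, hx1, hg1, hd1⟩ := ihm.2 _ _ h1
        obtain ⟨j2, c1, c2, c3, d1, hc1, hvc, hc3, hd1', hg2, hd2⟩ := ihn.2 _ _ h2
        exact ⟨j1 + j2, par y3 c3, par x1 d1,
          (((reds_par hy1 hc1).tail (Red.r14l hvy hvc hsub)).trans (reds_par hy3 hc3)),
          reds_par hx1 hd1', G.gpar hg1 hg2, comb2 par hd1 hd2⟩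
      | r14r h1 h2 hsub =>
        obtain ⟨j1, y1, y2, y3, x1, hy1, hvy, hy3, hx1, hg1, hd1⟩ := ihm.2 _ _ h1
        obtain ⟨j2, c1, c2, c3, d1, hc1, hvc, hc3, hd1', hg2, hd2⟩ := ihn.2 _ _ h2
        exact ⟨j1 + j2, par y3 c3, par x1 d1,
          (((reds_par hy1 hc1).tail (Red.r14r hvy hvc hsub)).trans (reds_par hy3 hc3)),
          reds_par hx1 hd1', G.gpar hg1 hg2, comb2 par hd1 hd2⟩
      | r15l h1 h2 hns =>
        obtain ⟨j1, y1, y2, y3, x1, hy1, hvy, hy3, hx1, hg1, hd1⟩ := ihm.2 _ _ h1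
        obtain ⟨j2, c1, c2, c3, d1, hc1, hvc, hc3, hd1', hg2, hd2⟩ := ihn.2 _ _ h2
        exact ⟨0, fail, fail, (reds_par hy1 hc1).tail (Red.r15l hvy hvc hns),
          .refl, G.grfl fail, zero_dis (m + n)⟩
      | r15r h1 h2 hns =>
        obtain ⟨j1, y1, y2, y3, x1, hy1, hvy, hy3, hx1, hg1, hd1⟩ := ihm.2 _ _ h1
        obtain ⟨j2, c1, c2, c3, d1, hc1, hvc, hc3, hd1', hg2, hd2⟩ := ihn.2 _ _ h2
        exact ⟨0, fail, fail, (reds_par hy1 hc1).tail (Red.r15r hvy hvc hns),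
          .refl, G.grfl fail, zero_dis (m + n)⟩
    · intro μ x' hv
      cases hv with
      | r11l _ h hne =>
        obtain ⟨j1, y1, y2, y3, x1, hy1, hvy, hy3, hx1, hg1, hd1⟩ := ihm.2 _ _ h
        exact ⟨j1 + n, par y1 c, par y2 c, par y3 c, par x1 d, reds_par_l _ hy1,
          Vis.r11l _ hvy hne, reds_par_l _ hy3, reds_par_l _ hx1,
          G.gpar hg1 hn, comb2 par hd1 (Or.inr ⟨rfl, rfl⟩)⟩
      | r11r _ h hne =>
        obtain ⟨j2, c1, c2, c3, d1, hc1, hvc, hc3, hd1', hg2, hd2⟩ := ihn.2 _ _ h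
        exact ⟨m + j2, par y0 c1, par y0 c2, par y0 c3, par x0 d1, reds_par_r _ hc1,
          Vis.r11r _ hvc hne, reds_par_r _ hc3, reds_par_r _ hd1',
          G.gpar hm hg2, comb2 par (Or.inr ⟨rfl, rfl⟩) hd2⟩
      | r12 h1 h2 =>
        obtain ⟨j1, y1, y2, y3, x1, hy1, hvy, hy3, hx1, hg1, hd1⟩ := ihm.2 _ _ h1
        obtain ⟨j2, c1, c2, c3, d1, hc1, hvc, hc3, hd1', hg2, hd2⟩ := ihn.2 _ _ h2
        exact ⟨j1 + j2, par y1 c1, par y2 c2, par y3 c3, par x1 d1, reds_par hy1 hc1,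
          Vis.r12 hvy hvc, reds_par hy3 hc3, reds_par hx1 hd1',
          G.gpar hg1 hg2, comb2 par hd1 hd2⟩
  | @gch m n y0 x0 c d hm hn ihm ihn =>
    constructor
    · intro x' hr
      cases hr with
      | r8l _ h =>
        obtain ⟨j1, y1, x1, hy, hx, hg, hd⟩ := ihm.1 _ h
        exact ⟨j1 + n, choice y1 c, choice x1 d, reds_choice_l _ hy, reds_choice_l _ hx,
          G.gch hg hn, comb2 choice hd (Or.inr ⟨rfl, rfl⟩)⟩
      | r8r _ h =>
        obtain ⟨j2, c1, d1, hc, hdx, hg, hd2⟩ := ihn.1 _ h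
        exact ⟨m + j2, choice y0 c1, choice x0 d1, reds_choice_r _ hc, reds_choice_r _ hdx,
          G.gch hm hg, comb2 choice (Or.inr ⟨rfl, rfl⟩) hd2⟩
    · intro μ x' hv
      cases hv with
      | r9l _ h =>
        obtain ⟨j1, y1, y2, y3, x1, hy1, hvy, hy3, hx1, hg1, hd1⟩ := ihm.2 _ _ h
        exact ⟨j1, choice y1 c, y2, y3, x1, reds_choice_l _ hy1, Vis.r9l _ hvy,
          hy3, hx1, hg1, comb1l n hd1⟩
      | r9r _ h =>
        obtain ⟨j2, c1, c2, c3, d1, hc1, hvc, hc3, hd1', hg2, hd2⟩ := ihn.2 _ _ h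
        exact ⟨j2, choice y0 c1, c2, c3, d1, reds_choice_r _ hc1, Vis.r9r _ hvc,
          hc3, hd1', hg2, comb1r m hd2⟩
  | g0 =>
    constructor
    · intro x' hr
      cases hr with
      | r8l _ h =>
        obtain ⟨v, hv, rfl⟩ := red_outV_inv h
        exact ⟨0, vR0, _, .refl, .refl, G.gLn hv, Or.inr ⟨rfl, rfl⟩⟩
      | r8r _ h =>
        obtain ⟨w, hw, rfl⟩ := red_outV_inv h
        exact ⟨0, vR0, _, .refl, .refl, G.gLb hw, Or.inr ⟨rfl, rfl⟩⟩
    · intro μ x' hv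
      cases hv with
      | r9l _ h => exact (vis_outV_tInt h).elim
      | r9r _ h => exact (vis_outV_tBool h).elim
  | @gLn v hv =>
    constructor
    · intro x' hr
      cases hr with
      | r8l _ h =>
        obtain ⟨v', hv', rfl⟩ := red_outV_inv h
        rw [Set.mem_singleton_iff] at hv'
        replace hv' := hv'.symm
        subst hv'
        exact ⟨0, vR0, _, .refl, .refl, G.gLn hv, Or.inr ⟨rfl, rfl⟩⟩
      | r8r _ h =>
        obtain ⟨w, hw, rfl⟩ := red_outV_inv h
        exact ⟨0, vR0, _, .refl, .refl, G.gLnb hv hw, Or.inr ⟨rfl, rfl⟩⟩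
    · intro μ x' hv'
      cases hv' with
      | r9l _ h =>
        obtain ⟨rfl, rfl⟩ := vis_outV_singleton h
        exact ⟨0, vRn v, vSn, vSn, vA1, reds_single (Red.r10l vA1 (Red.r6 succ hv)),
          Vis.r11l vA1 (Vis.r3 v succ) (outV_ne_tick v), .refl, .refl, G.gSn,
          Or.inr ⟨rfl, rfl⟩⟩
      | r9r _ h => exact (vis_outV_tBool h).elim
  | @gLb w hw =>
    constructor
    · intro x' hr
      cases hr with
      | r8l _ h =>
        obtain ⟨v, hv, rfl⟩ := red_outV_inv h
        exact ⟨0, vR0, _, .refl, .refl, G.gLnb hv hw, Or.inr ⟨rfl, rfl⟩⟩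
      | r8r _ h =>
        obtain ⟨w', hw', rfl⟩ := red_outV_inv h
        rw [Set.mem_singleton_iff] at hw'
        replace hw' := hw'.symm
        subst hw'
        exact ⟨0, vR0, _, .refl, .refl, G.gLb hw, Or.inr ⟨rfl, rfl⟩⟩
    · intro μ x' hv'
      cases hv' with
      | r9l _ h => exact (vis_outV_tInt h).elim
      | r9r _ h =>
        obtain ⟨rfl, rfl⟩ := vis_outV_singleton h
        exact ⟨0, vRb w, vTb, vTb, vB1, reds_single (Red.r10r vB1 (Red.r6 succ hw)),
          Vis.r11r vB1 (Vis.r3 w succ) (outV_ne_tick w), .refl, .refl, G.gTb,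
          Or.inr ⟨rfl, rfl⟩⟩
  | @gLnb v w hv hw =>
    constructor
    · intro x' hr
      cases hr with
      | r8l _ h =>
        obtain ⟨v', hv', rfl⟩ := red_outV_inv h
        rw [Set.mem_singleton_iff] at hv'
        replace hv' := hv'.symm
        subst hv'
        exact ⟨0, vR0, _, .refl, .refl, G.gLnb hv hw, Or.inr ⟨rfl, rfl⟩⟩
      | r8r _ h =>
        obtain ⟨w', hw', rfl⟩ := red_outV_inv h
        rw [Set.mem_singleton_iff] at hw'
        replace hw' := hw'.symm
        subst hw'
        exact ⟨0, vR0, _, .refl, .refl, G.gLnb hv hw, Or.inr ⟨rfl, rfl⟩⟩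
    · intro μ x' hv'
      cases hv' with
      | r9l _ h =>
        obtain ⟨rfl, rfl⟩ := vis_outV_singleton h
        exact ⟨0, vRn v, vSn, vSn, vA1, reds_single (Red.r10l vA1 (Red.r6 succ hv)),
          Vis.r11l vA1 (Vis.r3 v succ) (outV_ne_tick v), .refl, .refl, G.gSn,
          Or.inr ⟨rfl, rfl⟩⟩
      | r9r _ h =>
        obtain ⟨rfl, rfl⟩ := vis_outV_singleton h
        exact ⟨0, vRb w, vTb, vTb, vB1, reds_single (Red.r10r vB1 (Red.r6 succ hw)),
          Vis.r11r vB1 (Vis.r3 w succ) (outV_ne_tick w), .refl, .refl, G.gTb,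
          Or.inr ⟨rfl, rfl⟩⟩
  | gSn =>
    constructor
    · intro x' hr
      obtain ⟨w, hw, rfl⟩ := red_outV_inv hr
      exact ⟨0, vSnb w, cV w, reds_single (Red.r10r succ (Red.r6 succ hw)), .refl,
        G.gSnb hw, Or.inr ⟨rfl, rfl⟩⟩
    · intro μ x' hv
      exact (vis_outV_tBool hv).elim
  | @gSnb w hw =>
    constructor
    · intro x' hr
      obtain ⟨w', hw', rfl⟩ := red_outV_inv hr
      rw [Set.mem_singleton_iff] at hw'
      replace hw' := hw'.symm
      subst hw'
      exact ⟨0, _, _, .refl, .refl, G.gSnb hw, Or.inr ⟨rfl, rfl⟩⟩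
    · intro μ x' hv
      obtain ⟨rfl, rfl⟩ := vis_outV_singleton hv
      exact ⟨0, vSnb w, vUU, vUU, succ, .refl,
        Vis.r11r succ (Vis.r3 w succ) (outV_ne_tick w), .refl, .refl, G.gU,
        Or.inr ⟨rfl, rfl⟩⟩
  | gTb =>
    constructor
    · intro x' hr
      obtain ⟨v, hv, rfl⟩ := red_outV_inv hr
      exact ⟨0, vTnb v, cV v, reds_single (Red.r10l succ (Red.r6 succ hv)), .refl,
        G.gTnb hv, Or.inr ⟨rfl, rfl⟩⟩
    · intro μ x' hv
      exact (vis_outV_tInt hv).elim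
  | @gTnb v hv =>
    constructor
    · intro x' hr
      obtain ⟨v', hv', rfl⟩ := red_outV_inv hr
      rw [Set.mem_singleton_iff] at hv'
      replace hv' := hv'.symm
      subst hv'
      exact ⟨0, _, _, .refl, .refl, G.gTnb hv, Or.inr ⟨rfl, rfl⟩⟩
    · intro μ x' hv'
      obtain ⟨rfl, rfl⟩ := vis_outV_singleton hv'
      exact ⟨0, vTnb v, vUU, vUU, succ, .refl,
        Vis.r11l succ (Vis.r3 v succ) (outV_ne_tick v), .refl, .refl, G.gU,
        Or.inr ⟨rfl, rfl⟩⟩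
  | gU =>
    constructor
    · intro x' hr
      exact (red_succ_inv hr).elim
    · intro μ x' hv
      obtain ⟨rfl, rfl⟩ := vis_succ_inv hv
      exact ⟨0, vUU, vUU, vUU, succ, .refl, Vis.r12 Vis.r1 Vis.r1, .refl, .refl, G.gU,
        Or.inr ⟨rfl, rfl⟩⟩
  | @gRnLn v hv =>
    constructor
    · intro x' hr
      cases hr with
      | r8l _ h =>
        obtain ⟨v', hv', rfl⟩ := red_outV_inv h
        rw [Set.mem_singleton_iff] at hv'
        replace hv' := hv'.symm
        subst hv'
        exact ⟨1, vRn v, _, .refl, .refl, G.gRnLn hv, Or.inr ⟨rfl, rfl⟩⟩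
      | r8r _ h =>
        obtain ⟨w, hw, rfl⟩ := red_outV_inv h
        exact ⟨1, vRnb v w, _, reds_single (Red.r10r (cV v) (Red.r6 succ hw)), .refl,
          G.gRnbLnb hv hw, Or.inr ⟨rfl, rfl⟩⟩
    · intro μ x' hv'
      cases hv' with
      | r9l _ h =>
        obtain ⟨rfl, rfl⟩ := vis_outV_singleton h
        exact ⟨0, vRn v, vSn, vSn, vA1, .refl,
          Vis.r11l vA1 (Vis.r3 v succ) (outV_ne_tick v), .refl, .refl, G.gSn,
          Or.inl Nat.zero_lt_one⟩
      | r9r _ h => exact (vis_outV_tBool h).elim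
  | @gRbLb w hw =>
    constructor
    · intro x' hr
      cases hr with
      | r8l _ h =>
        obtain ⟨v, hv, rfl⟩ := red_outV_inv h
        exact ⟨1, vRnb v w, _, reds_single (Red.r10l (cV w) (Red.r6 succ hv)), .refl,
          G.gRnbLnb hv hw, Or.inr ⟨rfl, rfl⟩⟩
      | r8r _ h =>
        obtain ⟨w', hw', rfl⟩ := red_outV_inv h
        rw [Set.mem_singleton_iff] at hw'
        replace hw' := hw'.symm
        subst hw'
        exact ⟨1, vRb w, _, .refl, .refl, G.gRbLb hw, Or.inr ⟨rfl, rfl⟩⟩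
    · intro μ x' hv'
      cases hv' with
      | r9l _ h => exact (vis_outV_tInt h).elim
      | r9r _ h =>
        obtain ⟨rfl, rfl⟩ := vis_outV_singleton h
        exact ⟨0, vRb w, vTb, vTb, vB1, .refl,
          Vis.r11r vB1 (Vis.r3 w succ) (outV_ne_tick w), .refl, .refl, G.gTb,
          Or.inl Nat.zero_lt_one⟩
  | @gRnbLnb v w hv hw =>
    constructor
    · intro x' hr
      cases hr with
      | r8l _ h =>
        obtain ⟨v', hv', rfl⟩ := red_outV_inv h
        rw [Set.mem_singleton_iff] at hv'
        replace hv' := hv'.symm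
        subst hv'
        exact ⟨1, vRnb v w, _, .refl, .refl, G.gRnbLnb hv hw, Or.inr ⟨rfl, rfl⟩⟩
      | r8r _ h =>
        obtain ⟨w', hw', rfl⟩ := red_outV_inv h
        rw [Set.mem_singleton_iff] at hw'
        replace hw' := hw'.symm
        subst hw'
        exact ⟨1, vRnb v w, _, .refl, .refl, G.gRnbLnb hv hw, Or.inr ⟨rfl, rfl⟩⟩
    · intro μ x' hv'
      cases hv' with
      | r9l _ h =>
        obtain ⟨rfl, rfl⟩ := vis_outV_singleton h
        exact ⟨0, vRnb v w, vSnb w, vSnb w, cV w, .refl,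
          Vis.r11l (cV w) (Vis.r3 v succ) (outV_ne_tick v), .refl,
          reds_single (Red.r6 succ hw), G.gSnb hw, Or.inl Nat.zero_lt_one⟩
      | r9r _ h =>
        obtain ⟨rfl, rfl⟩ := vis_outV_singleton h
        exact ⟨0, vRnb v w, vTnb v, vTnb v, cV v, .refl,
          Vis.r11r (cV v) (Vis.r3 w succ) (outV_ne_tick w), .refl,
          reds_single (Red.r6 succ hv), G.gTnb hv, Or.inl Nat.zero_lt_one⟩
  | h0 =>
    constructor
    · intro x' hr
      cases hr with
      | r10l _ h =>
        obtain ⟨v, hv, rfl⟩ := red_outV_inv h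
        exact ⟨0, vLn v, _, reds_single (Red.r8l vEB (Red.r6 vA1 hv)), .refl,
          G.hRn hv, Or.inr ⟨rfl, rfl⟩⟩
      | r10r _ h =>
        obtain ⟨w, hw, rfl⟩ := red_outV_inv h
        exact ⟨0, vLb w, _, reds_single (Red.r8r vEA (Red.r6 vB1 hw)), .refl,
          G.hRb hw, Or.inr ⟨rfl, rfl⟩⟩
      | r13l h1 h2 => exact (vis_outV_tInt h1).elim
      | r13r h1 h2 => exact (vis_outV_tInt h1).elim
      | r14l h1 h2 h3 => exact (vis_outV_tInt h1).elim
      | r14r h1 h2 h3 => exact (vis_outV_tInt h1).elim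
      | r15l h1 h2 h3 => exact (vis_outV_tInt h1).elim
      | r15r h1 h2 h3 => exact (vis_outV_tInt h1).elim
    · intro μ x' hv
      cases hv with
      | r11l _ h _ => exact (vis_outV_tInt h).elim
      | r11r _ h _ => exact (vis_outV_tBool h).elim
      | r12 h _ => exact (vis_outV_tInt h).elim
  | @hRn v hv =>
    constructor
    · intro x' hr
      cases hr with
      | r10l _ h =>
        obtain ⟨v', hv', rfl⟩ := red_outV_inv h
        rw [Set.mem_singleton_iff] at hv'
        replace hv' := hv'.symm
        subst hv'
        exact ⟨0, vLn v, _, .refl, .refl, G.hRn hv, Or.inr ⟨rfl, rfl⟩⟩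
      | r10r _ h =>
        obtain ⟨w, hw, rfl⟩ := red_outV_inv h
        exact ⟨0, vLnb v w, _, reds_single (Red.r8r (outV {v} vA1) (Red.r6 vB1 hw)),
          .refl, G.hRnb hv hw, Or.inr ⟨rfl, rfl⟩⟩
      | r13l h1 h2 => exact (vis_outV_tBool h2).elim
      | r13r h1 h2 => exact Label.noConfusion (vis_outV_singleton h1).1
      | r14l h1 h2 h3 => exact Label.noConfusion (vis_outV_singleton h1).1
      | r14r h1 h2 h3 => exact Label.noConfusion (vis_outV_singleton h1).1
      | r15l h1 h2 h3 => exact Label.noConfusion (vis_outV_singleton h1).1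
      | r15r h1 h2 h3 => exact Label.noConfusion (vis_outV_singleton h1).1
    · intro μ x' hv'
      cases hv' with
      | r11l _ h _ =>
        obtain ⟨rfl, rfl⟩ := vis_outV_singleton h
        exact ⟨0, vLn v, vA1, vA1, vSn, .refl, Vis.r9l vEB (Vis.r3 v vA1), .refl, .refl,
          G.hSn, Or.inr ⟨rfl, rfl⟩⟩
      | r11r _ h _ => exact (vis_outV_tBool h).elim
      | r12 h1 h2 => exact Label.noConfusion (vis_outV_singleton h1).1
  | @hRb w hw =>
    constructor
    · intro x' hr
      cases hr with
      | r10l _ h =>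
        obtain ⟨v, hv, rfl⟩ := red_outV_inv h
        exact ⟨0, vLnb v w, _, reds_single (Red.r8l (outV {w} vB1) (Red.r6 vA1 hv)),
          .refl, G.hRnb hv hw, Or.inr ⟨rfl, rfl⟩⟩
      | r10r _ h =>
        obtain ⟨w', hw', rfl⟩ := red_outV_inv h
        rw [Set.mem_singleton_iff] at hw'
        replace hw' := hw'.symm
        subst hw'
        exact ⟨0, vLb w, _, .refl, .refl, G.hRb hw, Or.inr ⟨rfl, rfl⟩⟩
      | r13l h1 h2 => exact (vis_outV_tInt h1).elim
      | r13r h1 h2 => exact (vis_outV_tInt h1).elim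
      | r14l h1 h2 h3 => exact (vis_outV_tInt h1).elim
      | r14r h1 h2 h3 => exact (vis_outV_tInt h1).elim
      | r15l h1 h2 h3 => exact (vis_outV_tInt h1).elim
      | r15r h1 h2 h3 => exact (vis_outV_tInt h1).elim
    · intro μ x' hv'
      cases hv' with
      | r11l _ h _ => exact (vis_outV_tInt h).elim
      | r11r _ h _ =>
        obtain ⟨rfl, rfl⟩ := vis_outV_singleton h
        exact ⟨0, vLb w, vB1, vB1, vTb, .refl, Vis.r9r vEA (Vis.r3 w vB1), .refl, .refl,
          G.hTb, Or.inr ⟨rfl, rfl⟩⟩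
      | r12 h1 h2 => exact (vis_outV_tInt h1).elim
  | @hRnb v w hv hw =>
    constructor
    · intro x' hr
      cases hr with
      | r10l _ h =>
        obtain ⟨v', hv', rfl⟩ := red_outV_inv h
        rw [Set.mem_singleton_iff] at hv'
        replace hv' := hv'.symm
        subst hv'
        exact ⟨0, vLnb v w, _, .refl, .refl, G.hRnb hv hw, Or.inr ⟨rfl, rfl⟩⟩
      | r10r _ h =>
        obtain ⟨w', hw', rfl⟩ := red_outV_inv h
        rw [Set.mem_singleton_iff] at hw'
        replace hw' := hw'.symm
        subst hw'
        exact ⟨0, vLnb v w, _, .refl, .refl, G.hRnb hv hw, Or.inr ⟨rfl, rfl⟩⟩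
      | r13l h1 h2 => exact Label.noConfusion (vis_outV_singleton h2).1
      | r13r h1 h2 => exact Label.noConfusion (vis_outV_singleton h1).1
      | r14l h1 h2 h3 => exact Label.noConfusion (vis_outV_singleton h1).1
      | r14r h1 h2 h3 => exact Label.noConfusion (vis_outV_singleton h1).1
      | r15l h1 h2 h3 => exact Label.noConfusion (vis_outV_singleton h1).1
      | r15r h1 h2 h3 => exact Label.noConfusion (vis_outV_singleton h1).1
    · intro μ x' hv'
      cases hv' with
      | r11l _ h _ =>
        obtain ⟨rfl, rfl⟩ := vis_outV_singleton h
        exact ⟨0, vLnb v w, vA1, cV w, vSnb w, .refl,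
          Vis.r9l (outV {w} vB1) (Vis.r3 v vA1), reds_single (Red.r6 succ hw), .refl,
          G.hSnb hw, Or.inr ⟨rfl, rfl⟩⟩
      | r11r _ h _ =>
        obtain ⟨rfl, rfl⟩ := vis_outV_singleton h
        exact ⟨0, vLnb v w, vB1, cV v, vTnb v, .refl,
          Vis.r9r (outV {v} vA1) (Vis.r3 w vB1), reds_single (Red.r6 succ hv), .refl,
          G.hTnb hv, Or.inr ⟨rfl, rfl⟩⟩
      | r12 h1 h2 => exact Label.noConfusion (vis_outV_singleton h1).1
  | hSn =>
    constructor
    · intro x' hr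
      cases hr with
      | r10l _ h => exact (red_succ_inv h).elim
      | r10r _ h =>
        obtain ⟨w, hw, rfl⟩ := red_outV_inv h
        exact ⟨0, cV w, _, reds_single (Red.r6 succ hw), .refl, G.hSnb hw,
          Or.inr ⟨rfl, rfl⟩⟩
      | r13l h1 h2 => exact Label.noConfusion (vis_succ_inv h1).1
      | r13r h1 h2 => exact Label.noConfusion (vis_succ_inv h1).1
      | r14l h1 h2 h3 => exact Label.noConfusion (vis_succ_inv h1).1
      | r14r h1 h2 h3 => exact Label.noConfusion (vis_succ_inv h1).1
      | r15l h1 h2 h3 => exact Label.noConfusion (vis_succ_inv h1).1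
      | r15r h1 h2 h3 => exact Label.noConfusion (vis_succ_inv h1).1
    · intro μ x' hv
      cases hv with
      | r11l _ h hne => exact (hne (vis_succ_inv h).1).elim
      | r11r _ h _ => exact (vis_outV_tBool h).elim
      | r12 h1 h2 => exact (vis_outV_tBool h2).elim
  | @hSnb w hw =>
    constructor
    · intro x' hr
      cases hr with
      | r10l _ h => exact (red_succ_inv h).elim
      | r10r _ h =>
        obtain ⟨w', hw', rfl⟩ := red_outV_inv h
        rw [Set.mem_singleton_iff] at hw'
        replace hw' := hw'.symm
        subst hw'
        exact ⟨0, cV w, _, .refl, .refl, G.hSnb hw, Or.inr ⟨rfl, rfl⟩⟩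
      | r13l h1 h2 => exact Label.noConfusion (vis_succ_inv h1).1
      | r13r h1 h2 => exact Label.noConfusion (vis_succ_inv h1).1
      | r14l h1 h2 h3 => exact Label.noConfusion (vis_succ_inv h1).1
      | r14r h1 h2 h3 => exact Label.noConfusion (vis_succ_inv h1).1
      | r15l h1 h2 h3 => exact Label.noConfusion (vis_succ_inv h1).1
      | r15r h1 h2 h3 => exact Label.noConfusion (vis_succ_inv h1).1
    · intro μ x' hv
      cases hv with
      | r11l _ h hne => exact (hne (vis_succ_inv h).1).elim
      | r11r _ h _ =>
        obtain ⟨rfl, rfl⟩ := vis_outV_singleton h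
        exact ⟨0, cV w, succ, succ, vUU, .refl, Vis.r3 w succ, .refl, .refl, G.hU,
          Or.inr ⟨rfl, rfl⟩⟩
      | r12 h1 h2 => exact Label.noConfusion (vis_outV_singleton h2).1
  | hTb =>
    constructor
    · intro x' hr
      cases hr with
      | r10l _ h =>
        obtain ⟨v, hv, rfl⟩ := red_outV_inv h
        exact ⟨0, cV v, _, reds_single (Red.r6 succ hv), .refl, G.hTnb hv,
          Or.inr ⟨rfl, rfl⟩⟩
      | r10r _ h => exact (red_succ_inv h).elim
      | r13l h1 h2 => exact Label.noConfusion (vis_succ_inv h2).1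
      | r13r h1 h2 => exact (vis_outV_tInt h1).elim
      | r14l h1 h2 h3 => exact (vis_outV_tInt h1).elim
      | r14r h1 h2 h3 => exact (vis_outV_tInt h1).elim
      | r15l h1 h2 h3 => exact (vis_outV_tInt h1).elim
      | r15r h1 h2 h3 => exact (vis_outV_tInt h1).elim
    · intro μ x' hv
      cases hv with
      | r11l _ h _ => exact (vis_outV_tInt h).elim
      | r11r _ h hne => exact (hne (vis_succ_inv h).1).elim
      | r12 h1 h2 => exact (vis_outV_tInt h1).elim
  | @hTnb v hv =>
    constructor
    · intro x' hr
      cases hr with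
      | r10l _ h =>
        obtain ⟨v', hv', rfl⟩ := red_outV_inv h
        rw [Set.mem_singleton_iff] at hv'
        replace hv' := hv'.symm
        subst hv'
        exact ⟨0, cV v, _, .refl, .refl, G.hTnb hv, Or.inr ⟨rfl, rfl⟩⟩
      | r10r _ h => exact (red_succ_inv h).elim
      | r13l h1 h2 => exact Label.noConfusion (vis_succ_inv h2).1
      | r13r h1 h2 => exact Label.noConfusion (vis_outV_singleton h1).1
      | r14l h1 h2 h3 => exact Label.noConfusion (vis_outV_singleton h1).1
      | r14r h1 h2 h3 => exact Label.noConfusion (vis_outV_singleton h1).1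
      | r15l h1 h2 h3 => exact Label.noConfusion (vis_outV_singleton h1).1
      | r15r h1 h2 h3 => exact Label.noConfusion (vis_outV_singleton h1).1
    · intro μ x' hv'
      cases hv' with
      | r11l _ h _ =>
        obtain ⟨rfl, rfl⟩ := vis_outV_singleton h
        exact ⟨0, cV v, succ, succ, vUU, .refl, Vis.r3 v succ, .refl, .refl, G.hU,
          Or.inr ⟨rfl, rfl⟩⟩
      | r11r _ h hne => exact (hne (vis_succ_inv h).1).elim
      | r12 h1 h2 => exact Label.noConfusion (vis_outV_singleton h1).1
  | hU =>
    constructor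
    · intro x' hr
      cases hr with
      | r10l _ h => exact (red_succ_inv h).elim
      | r10r _ h => exact (red_succ_inv h).elim
      | r13l h1 h2 => exact Label.noConfusion (vis_succ_inv h1).1
      | r13r h1 h2 => exact Label.noConfusion (vis_succ_inv h1).1
      | r14l h1 h2 h3 => exact Label.noConfusion (vis_succ_inv h1).1
      | r14r h1 h2 h3 => exact Label.noConfusion (vis_succ_inv h1).1
      | r15l h1 h2 h3 => exact Label.noConfusion (vis_succ_inv h1).1
      | r15r h1 h2 h3 => exact Label.noConfusion (vis_succ_inv h1).1
    · intro μ x' hv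
      cases hv with
      | r11l _ h hne => exact (hne (vis_succ_inv h).1).elim
      | r11r _ h hne => exact (hne (vis_succ_inv h).1).elim
      | r12 h1 h2 =>
        obtain ⟨-, rfl⟩ := vis_succ_inv h1
        obtain ⟨-, rfl⟩ := vis_succ_inv h2
        exact ⟨0, succ, succ, succ, vUU, .refl, Vis.r1, .refl, .refl, G.hU,
          Or.inr ⟨rfl, rfl⟩⟩

end PCh

theorem par_outputs_as_external_choice :
    SSEquiv
      (SessionType.choice
        (SessionType.outV tInt (SessionType.outV tBool SessionType.succ))
        (SessionType.outV tBool (SessionType.outV tInt SessionType.succ)))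
      (SessionType.par (SessionType.outV tInt SessionType.succ)
        (SessionType.outV tBool SessionType.succ)) := by
  constructor
  · intro ρ σ hc
    exact PCh.sound SubRel PCh.fwdSim PCh.coupled PCh.revSim _ _
      (PCh.S.spar (PCh.S.sch PCh.S.s0 (PCh.S.srfl ρ)) (PCh.S.srfl σ)) hc
  · intro ρ σ hc
    exact PCh.sound SubRel PCh.fwdSim PCh.coupled PCh.revSim _ _
      (PCh.S.spar (PCh.S.sch PCh.S.t0 (PCh.S.srfl ρ)) (PCh.S.srfl σ)) hc
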